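/- Let A be a countable alphabet, P a probability distribution on A with finite source entropy H(P) < ∞, and D a proper dictionary over A. Then for every positive integer n, H(Dₙ) = H(P) · l̄(Dₙ), where Dₙ = {α ∈ D : |α| < n} ∪ {α ∈ D : |α| = n} ∪ Tₙ and Tₙ = {α ∈ Aⁿ : no β ∈ D is a prefix of α}. -/
import Mathlib


open scoped ENNReal
open Filter

/-- The probability of a finite string, obtained by extending the
distribution `P` multiplicatively: `P(a₁⋯aₙ) = ∏ᵢ P(aᵢ)`. -/
noncomputable def strProb {A : Type*} (P : PMF A) (l : List A) : ℝ≥0∞ :=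
  (l.map fun a => P a).prod

/-- A dictionary is a set of nonempty finite strings. -/
def IsDictionary {A : Type*} (D : Set (List A)) : Prop :=
  ∀ α ∈ D, α ≠ []

/-- A dictionary is proper if no string in it is a (proper) prefix of
another string in it. -/
def IsProper {A : Type*} (D : Set (List A)) : Prop :=
  ∀ α ∈ D, ∀ β ∈ D, α <+: β → α = β

/-- A dictionary is complete if every infinite sequence over `A` has a
prefix in it. -/
def IsCompleteDict {A : Type*} (D : Set (List A)) : Prop :=
  ∀ x : ℕ → A, ∃ α ∈ D, α = (List.range α.length).map x

/-- The probability that the length-`n` prefix of a random infinite sequence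
has some prefix belonging to `D`. -/
noncomputable def prefixProb {A : Type*} (P : PMF A) (D : Set (List A)) (n : ℕ) : ℝ≥0∞ :=
  ∑' γ : {γ : List A // γ.length = n ∧ ∃ β ∈ D, β <+: γ}, strProb P γ

/-- `D` is almost surely complete: under the infinite product measure `P^ℕ`,
the event that an infinite sequence has a prefix in `D` has probability `1`.
(By continuity from below, this probability is the limit, as `n → ∞`, of the
probability that the length-`n` prefix has a prefix in `D`.) -/
def IsASC {A : Type*} (P : PMF A) (D : Set (List A)) : Prop :=
  Tendsto (prefixProb P D) atTop (nhds 1)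

/-- `Tset D n` = strings of length `n` having no prefix in `D`. -/
def Tset {A : Type*} (D : Set (List A)) (n : ℕ) : Set (List A) :=
  {α | α.length = n ∧ ∀ β ∈ D, ¬ β <+: α}

/-- `Dperp D n = {α ∈ D : |α| = n} ∪ Tₙ`. -/
def Dperp {A : Type*} (D : Set (List A)) (n : ℕ) : Set (List A) :=
  {α ∈ D | α.length = n} ∪ Tset D n

/-- `Dn D n = {α ∈ D : |α| < n} ∪ Dₙ^⊥`. -/
def Dn {A : Type*} (D : Set (List A)) (n : ℕ) : Set (List A) :=
  {α ∈ D | α.length < n} ∪ Dperp D n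

/-- The one-letter extensions `αA = {αa : a ∈ A}` of a string `α`. -/
def oneExt {A : Type*} (α : List A) : Set (List A) :=
  {l | ∃ a : A, l = α ++ [a]}

/-- The extension `D[α] = (D \ {α}) ∪ αA` of a dictionary at `α`. -/
def extendDict {A : Type*} (D : Set (List A)) (α : List A) : Set (List A) :=
  (D \ {α}) ∪ oneExt α

/-- The nonnegative entropy contribution `-p log₂ p ∈ [0,∞]` of a
probability value `p`. -/
noncomputable def entTerm (p : ℝ≥0∞) : ℝ≥0∞ :=
  ENNReal.ofReal (-(p.toReal * Real.logb 2 p.toReal))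

/-- The entropy `H(E) = -∑_{α∈E} P(α) log₂ P(α)` of a dictionary, in `[0,∞]`. -/
noncomputable def dictEntropy {A : Type*} (P : PMF A) (E : Set (List A)) : ℝ≥0∞ :=
  ∑' α : E, entTerm (strProb P α)

/-- The average length `l̄(E) = ∑_{α∈E} P(α)|α|` of a dictionary, in `[0,∞]`. -/
noncomputable def avgLen {A : Type*} (P : PMF A) (E : Set (List A)) : ℝ≥0∞ :=
  ∑' α : E, strProb P α * (α : List A).length

/-- The source entropy `H(P) = -∑_{a∈A} P(a) log₂ P(a)`, in `[0,∞]`. -/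
noncomputable def srcEntropy {A : Type*} (P : PMF A) : ℝ≥0∞ :=
  ∑' a : A, entTerm (P a)

section Aux
variable {A : Type*}

lemma strProb_nil (P : PMF A) : strProb P [] = 1 := rfl

lemma strProb_cons (P : PMF A) (a : A) (l : List A) :
    strProb P (a :: l) = P a * strProb P l := by simp [strProb]

lemma strProb_append (P : PMF A) (l₁ l₂ : List A) :
    strProb P (l₁ ++ l₂) = strProb P l₁ * strProb P l₂ := by simp [strProb]

lemma strProb_le_one (P : PMF A) (l : List A) : strProb P l ≤ 1 := by
  induction l with
  | nil => simp [strProb_nil]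
  | cons a l ih => rw [strProb_cons]; exact mul_le_one' (PMF.coe_le_one P a) ih

lemma entTerm_zero : entTerm 0 = 0 := by simp [entTerm]

lemma entTerm_one : entTerm 1 = 0 := by simp [entTerm]

lemma entTerm_mul {p q : ℝ≥0∞} (hp : p ≤ 1) (hq : q ≤ 1) :
    entTerm (p * q) = q * entTerm p + p * entTerm q := by
  rcases eq_or_ne p 0 with rfl | hp0
  · simp [entTerm_zero]
  rcases eq_or_ne q 0 with rfl | hq0
  · simp [entTerm_zero]
  have hpt : p ≠ ⊤ := ne_top_of_le_ne_top ENNReal.one_ne_top hp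
  have hqt : q ≠ ⊤ := ne_top_of_le_ne_top ENNReal.one_ne_top hq
  set x := p.toReal with hx
  set y := q.toReal with hy
  have hx0 : 0 < x := ENNReal.toReal_pos hp0 hpt
  have hy0 : 0 < y := ENNReal.toReal_pos hq0 hqt
  have hx1 : x ≤ 1 := ENNReal.toReal_le_of_le_ofReal one_pos.le (by simpa using hp)
  have hy1 : y ≤ 1 := ENNReal.toReal_le_of_le_ofReal one_pos.le (by simpa using hq)
  have hxl : 0 ≤ -(x * Real.logb 2 x) := by
    have := Real.logb_nonpos one_lt_two hx0.le hx1
    nlinarith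
  have hyl : 0 ≤ -(y * Real.logb 2 y) := by
    have := Real.logb_nonpos one_lt_two hy0.le hy1
    nlinarith
  have hmul : (p * q).toReal = x * y := ENNReal.toReal_mul
  have hlog : Real.logb 2 (x * y) = Real.logb 2 x + Real.logb 2 y :=
    Real.logb_mul hx0.ne' hy0.ne'
  have key : -((p * q).toReal * Real.logb 2 (p * q).toReal)
      = y * (-(x * Real.logb 2 x)) + x * (-(y * Real.logb 2 y)) := by
    rw [hmul, hlog]; ring
  rw [entTerm, key, ENNReal.ofReal_add (by positivity) (by positivity),
    ENNReal.ofReal_mul hy0.le, ENNReal.ofReal_mul hx0.le,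
    hx, hy, ENNReal.ofReal_toReal hpt, ENNReal.ofReal_toReal hqt]
  rfl

lemma tsum_strProb (P : PMF A) : ∀ m : ℕ,
    ∑' l : {l : List A // l.length = m}, strProb P (l : List A) = 1 := by
  intro m
  induction m with
  | zero =>
    rw [tsum_eq_single (⟨[], rfl⟩ : {l : List A // l.length = 0})]
    · exact strProb_nil P
    · rintro ⟨l, hl⟩ hne
      exact absurd (Subtype.ext (List.length_eq_zero_iff.mp hl)) hne
  | succ m ih =>
    have hbij : Function.Bijective (fun p : A × {l : List A // l.length = m} =>
        (⟨p.1 :: (p.2 : List A), by simp [p.2.2]⟩ : {l : List A // l.length = m + 1})) := by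
      constructor
      · rintro ⟨a₁, l₁, h₁⟩ ⟨a₂, l₂, h₂⟩ h
        simp only [Subtype.mk.injEq, List.cons.injEq] at h
        obtain ⟨rfl, rfl⟩ := h
        rfl
      · rintro ⟨l, hl⟩
        cases l with
        | nil => simp at hl
        | cons a t => exact ⟨⟨a, ⟨t, by simpa using hl⟩⟩, rfl⟩
    rw [← (Equiv.ofBijective _ hbij).tsum_eq fun l : {l : List A // l.length = m + 1} => strProb P (l : List A)]
    simp only [Equiv.ofBijective_apply]
    have hp : (∑' (c : A × {l : List A // l.length = m}), strProb P (c.1 :: (c.2 : List A)))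
        = ∑' (a : A), ∑' (l : {l : List A // l.length = m}), strProb P (a :: (l : List A)) :=
      ENNReal.tsum_prod' (f := fun c : A × {l : List A // l.length = m} => strProb P (c.1 :: (c.2 : List A)))
    rw [hp]
    simp only [strProb_cons, ENNReal.tsum_mul_left, ih, mul_one]
    exact P.tsum_coe

lemma tsum_entTerm (P : PMF A) : ∀ m : ℕ,
    ∑' l : {l : List A // l.length = m}, entTerm (strProb P (l : List A))
      = m * srcEntropy P := by
  intro m
  induction m with
  | zero =>
    rw [tsum_eq_single (⟨[], rfl⟩ : {l : List A // l.length = 0})]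
    · simp [strProb_nil, entTerm_one]
    · rintro ⟨l, hl⟩ hne
      exact absurd (Subtype.ext (List.length_eq_zero_iff.mp hl)) hne
  | succ m ih =>
    have hbij : Function.Bijective (fun p : A × {l : List A // l.length = m} =>
        (⟨p.1 :: (p.2 : List A), by simp [p.2.2]⟩ : {l : List A // l.length = m + 1})) := by
      constructor
      · rintro ⟨a₁, l₁, h₁⟩ ⟨a₂, l₂, h₂⟩ h
        simp only [Subtype.mk.injEq, List.cons.injEq] at h
        obtain ⟨rfl, rfl⟩ := h
        rfl
      · rintro ⟨l, hl⟩
        cases l with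
        | nil => simp at hl
        | cons a t => exact ⟨⟨a, ⟨t, by simpa using hl⟩⟩, rfl⟩
    rw [← (Equiv.ofBijective _ hbij).tsum_eq fun l : {l : List A // l.length = m + 1} => entTerm (strProb P (l : List A))]
    simp only [Equiv.ofBijective_apply]
    have hp : (∑' (c : A × {l : List A // l.length = m}), entTerm (strProb P (c.1 :: (c.2 : List A))))
        = ∑' (a : A), ∑' (l : {l : List A // l.length = m}), entTerm (strProb P (a :: (l : List A))) :=
      ENNReal.tsum_prod' (f := fun c : A × {l : List A // l.length = m} => entTerm (strProb P (c.1 :: (c.2 : List A))))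
    rw [hp]
    have hterm : ∀ (a : A) (l : {l : List A // l.length = m}),
        entTerm (strProb P ((a, l).1 :: ((a, l).2 : List A)))
          = strProb P (l : List A) * entTerm (P a) + P a * entTerm (strProb P (l : List A)) := by
      intro a l
      rw [strProb_cons]
      exact entTerm_mul (PMF.coe_le_one P a) (strProb_le_one P _)
    calc ∑' (a : A), ∑' (l : {l : List A // l.length = m}),
          entTerm (strProb P ((a :: (l : List A))))
        = ∑' (a : A), ∑' (l : {l : List A // l.length = m}),
            (strProb P (l : List A) * entTerm (P a) + P a * entTerm (strProb P (l : List A))) := by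
          congr 1; ext a; congr 1; ext l; exact hterm a l
      _ = ∑' (a : A), ((∑' (l : {l : List A // l.length = m}), strProb P (l : List A)) * entTerm (P a)
            + P a * ∑' (l : {l : List A // l.length = m}), entTerm (strProb P (l : List A))) := by
          congr 1; ext a
          rw [ENNReal.tsum_add, ENNReal.tsum_mul_right, ENNReal.tsum_mul_left]
      _ = ∑' (a : A), (entTerm (P a) + P a * (m * srcEntropy P)) := by
          simp [tsum_strProb P m, ih]
      _ = srcEntropy P + (m * srcEntropy P) := by
          rw [ENNReal.tsum_add, srcEntropy]
          congr 1
          rw [ENNReal.tsum_mul_right, P.tsum_coe, one_mul]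
      _ = (m + 1 : ℕ) * srcEntropy P := by
          push_cast
          ring

variable {D : Set (List A)} {n : ℕ}

lemma mem_Dn_length_le {β : List A} (hβ : β ∈ Dn D n) : β.length ≤ n := by
  rcases hβ with ⟨_, h⟩ | ⟨_, h⟩ | ⟨h, _⟩
  · exact h.le
  · exact h.le
  · exact h.le

lemma exists_prefix_Dn {α : List A} (hα : α.length = n) :
    ∃ β ∈ Dn D n, β <+: α := by
  by_cases h : ∃ β ∈ D, β <+: α
  · obtain ⟨β, hβD, hpre⟩ := h
    have hlen : β.length ≤ n := hα ▸ hpre.length_le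
    rcases lt_or_eq_of_le hlen with hlt | heq
    · exact ⟨β, Or.inl ⟨hβD, hlt⟩, hpre⟩
    · have : β = α := hpre.eq_of_length (by omega)
      exact ⟨β, Or.inr (Or.inl ⟨hβD, heq⟩), hpre⟩
  · push_neg at h
    exact ⟨α, Or.inr (Or.inr ⟨hα, h⟩), List.prefix_refl α⟩

lemma unique_prefix_Dn (hprop : IsProper D) {α β₁ β₂ : List A} (hα : α.length = n)
    (h₁ : β₁ ∈ Dn D n) (hp₁ : β₁ <+: α) (h₂ : β₂ ∈ Dn D n) (hp₂ : β₂ <+: α) :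
    β₁ = β₂ := by
  have mem : ∀ β, β ∈ Dn D n → β ∈ D ∨ β ∈ Tset D n := by
    rintro β (⟨h, _⟩ | ⟨h, _⟩ | h)
    · exact Or.inl h
    · exact Or.inl h
    · exact Or.inr h
  have tset_eq : ∀ β, β ∈ Tset D n → β <+: α → β = α := by
    intro β hβ hpre
    exact hpre.eq_of_length (by rw [hβ.1, hα])
  rcases mem β₁ h₁ with hD₁ | hT₁ <;> rcases mem β₂ h₂ with hD₂ | hT₂
  · rcases List.prefix_or_prefix_of_prefix hp₁ hp₂ with h | h
    · exact hprop _ hD₁ _ hD₂ h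
    · exact (hprop _ hD₂ _ hD₁ h).symm
  · exact absurd (show β₁ <+: β₂ by rw [tset_eq β₂ hT₂ hp₂]; exact hp₁) (hT₂.2 β₁ hD₁)
  · exact absurd (show β₂ <+: β₁ by rw [tset_eq β₁ hT₁ hp₁]; exact hp₂) (hT₁.2 β₂ hD₂)
  · rw [tset_eq β₁ hT₁ hp₁, tset_eq β₂ hT₂ hp₂]

lemma tsum_split (P : PMF A) (hprop : IsProper D) (g : List A → ℝ≥0∞) :
    ∑' l : {l : List A // l.length = n}, g (l : List A)
      = ∑' β : Dn D n, ∑' γ : {γ : List A // γ.length = n - (β : List A).length},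
          g ((β : List A) ++ (γ : List A)) := by
  have hbij : Function.Bijective
      (fun x : Σ β : Dn D n, {γ : List A // γ.length = n - (β : List A).length} =>
        (⟨(x.1 : List A) ++ (x.2 : List A), by
          rw [List.length_append, x.2.2, Nat.add_sub_cancel' (mem_Dn_length_le x.1.2)]⟩ :
            {l : List A // l.length = n})) := by
    constructor
    · rintro ⟨⟨β₁, hb₁⟩, ⟨γ₁, hg₁⟩⟩ ⟨⟨β₂, hb₂⟩, ⟨γ₂, hg₂⟩⟩ h
      simp only [Subtype.mk.injEq] at h
      have hlen : (β₁ ++ γ₁).length = n := by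
        rw [List.length_append, hg₁, Nat.add_sub_cancel' (mem_Dn_length_le hb₁)]
      have hβ : β₁ = β₂ :=
        unique_prefix_Dn hprop hlen hb₁ (List.prefix_append _ _) hb₂
          (h ▸ List.prefix_append _ _)
      subst hβ
      have hγ : γ₁ = γ₂ := List.append_cancel_left h
      subst hγ
      rfl
    · rintro ⟨α, hα⟩
      obtain ⟨β, hβ, hpre⟩ := exists_prefix_Dn (D := D) hα
      obtain ⟨t, rfl⟩ := hpre
      refine ⟨⟨⟨β, hβ⟩, ⟨(β ++ t).drop β.length, by rw [List.length_drop, hα]⟩⟩, ?_⟩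
      apply Subtype.ext
      simp only [List.drop_left]
  rw [← (Equiv.ofBijective _ hbij).tsum_eq fun l : {l : List A // l.length = n} => g (l : List A)]
  simp only [Equiv.ofBijective_apply]
  rw [ENNReal.tsum_sigma']

end Aux

private theorem dictEntropy_Dn_eq_aux {A : Type*} [Countable A] (P : PMF A)
    (hH : srcEntropy P < ⊤) (D : Set (List A)) 
    (hprop : IsProper D) (n : ℕ) (hn : 0 < n) :
    dictEntropy P (Dn D n) = srcEntropy P * avgLen P (Dn D n) := by
  set H := srcEntropy P with hHdef
  set E := Dn D n with hE
  -- total probability of E is 1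
  have hPsum : ∑' β : E, strProb P (β : List A) = 1 := by
    have h1 := tsum_split (n := n) P hprop (strProb P)
    rw [tsum_strProb P n] at h1
    have h2 : ∀ β : E, (∑' γ : {γ : List A // γ.length = n - (β : List A).length},
        strProb P ((β : List A) ++ (γ : List A))) = strProb P (β : List A) := by
      intro β
      simp only [strProb_append, ENNReal.tsum_mul_left, tsum_strProb, mul_one]
    rw [tsum_congr h2] at h1
    exact h1.symm
  -- chain rule
  have hkey : (n : ℝ≥0∞) * H = dictEntropy P E
      + H * (∑' β : E, strProb P (β : List A) * ((n - (β : List A).length : ℕ) : ℝ≥0∞)) := by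
    have h1 := tsum_split (n := n) P hprop (fun l => entTerm (strProb P l))
    rw [tsum_entTerm P n] at h1
    have h2 : ∀ β : E, (∑' γ : {γ : List A // γ.length = n - (β : List A).length},
        entTerm (strProb P ((β : List A) ++ (γ : List A))))
        = entTerm (strProb P (β : List A))
          + H * (strProb P (β : List A) * ((n - (β : List A).length : ℕ) : ℝ≥0∞)) := by
      intro β
      have : ∀ γ : {γ : List A // γ.length = n - (β : List A).length},
          entTerm (strProb P ((β : List A) ++ (γ : List A)))
            = strProb P (γ : List A) * entTerm (strProb P (β : List A))
              + strProb P (β : List A) * entTerm (strProb P (γ : List A)) := by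
        intro γ
        rw [strProb_append]
        exact entTerm_mul (strProb_le_one P _) (strProb_le_one P _)
      rw [tsum_congr this, ENNReal.tsum_add, ENNReal.tsum_mul_right, ENNReal.tsum_mul_left,
        tsum_strProb, tsum_entTerm, one_mul]
      ring
    rw [tsum_congr h2, ENNReal.tsum_add, ENNReal.tsum_mul_left] at h1
    exact h1
  -- the lengths sum up
  have hL : (∑' β : E, strProb P (β : List A) * ((n - (β : List A).length : ℕ) : ℝ≥0∞))
      + avgLen P E = (n : ℝ≥0∞) := by
    rw [avgLen, ← ENNReal.tsum_add]
    have h2 : ∀ β : E, strProb P (β : List A) * ((n - (β : List A).length : ℕ) : ℝ≥0∞)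
        + strProb P (β : List A) * ((β : List A).length : ℝ≥0∞)
        = strProb P (β : List A) * (n : ℝ≥0∞) := by
      intro β
      rw [← mul_add]
      congr 1
      rw [← Nat.cast_add, Nat.sub_add_cancel (mem_Dn_length_le β.2)]
    rw [tsum_congr h2, ENNReal.tsum_mul_right, hPsum, one_mul]
  -- finish
  have hHfin : (n : ℝ≥0∞) * H ≠ ⊤ := ENNReal.mul_ne_top (ENNReal.natCast_ne_top n) hH.ne
  have hmain : (n : ℝ≥0∞) * H + H * avgLen P E
      = (n : ℝ≥0∞) * H + dictEntropy P E := by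
    calc (n : ℝ≥0∞) * H + H * avgLen P E
        = dictEntropy P E
            + H * (∑' β : E, strProb P (β : List A) * ((n - (β : List A).length : ℕ) : ℝ≥0∞))
            + H * avgLen P E := by rw [hkey]
      _ = dictEntropy P E + H * ((∑' β : E, strProb P (β : List A)
            * ((n - (β : List A).length : ℕ) : ℝ≥0∞)) + avgLen P E) := by
          rw [mul_add]; ring
      _ = dictEntropy P E + H * n := by rw [hL]
      _ = (n : ℝ≥0∞) * H + dictEntropy P E := by ring
  have := (ENNReal.add_right_inj hHfin).mp hmain
  rw [this]


/-- For a proper dictionary `D` over a countable alphabet with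
finite source entropy, `H(Dₙ) = H(P)·l̄(Dₙ)` for every positive integer `n`. -/
theorem dictEntropy_Dn_eq {A : Type*} [Countable A] (P : PMF A)
    (hH : srcEntropy P < ⊤) (D : Set (List A)) (hdict : IsDictionary D)
    (hprop : IsProper D) (n : ℕ) (hn : 0 < n) :
    dictEntropy P (Dn D n) = srcEntropy P * avgLen P (Dn D n) := by
  exact dictEntropy_Dn_eq_aux P hH D hprop n hn
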